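/- Let σ₁ ≥ … ≥ σ_r > 0, D = diag(√σ₁, …, √σ_r), and let H be Hermitian with ‖H‖₂ ≤ 1. For every 1 ≤ i ≤ r and every Q ∈ ℂ^{r×i} with orthonormal columns, there exists a unit vector v ∈ ℂ^i such that ‖DHDQv‖₂ ≤ min_{1 ≤ j ≤ i} √(σ_j σ_{i−j+1}). -/

import Mathlib

/-!
Let `j ≤ i` attain the minimum and `t = i - j`. Asking that the first `j` coordinates of `HDQw`
and the first `t` coordinates of `Qw` vanish imposes `j + t < i + 1` linear conditions, so some
`w ≠ 0` satisfies them. On vectors vanishing below index `t` the diagonal `D` has norm at most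
`√σ_t`, hence `‖DHDQw‖ ≤ √σ_j ‖HDQw‖ ≤ √σ_j ‖DQw‖ ≤ √σ_j √σ_t ‖Qw‖ = √(σ_j σ_t) ‖w‖`.
-/

open Matrix Finset

/-- Spectral norm (largest singular value / L2 operator norm) of a complex matrix. -/
noncomputable def specNorm {m n : ℕ} (M : Matrix (Fin m) (Fin n) ℂ) : ℝ :=
  ‖LinearMap.toContinuousLinearMap (Matrix.toEuclideanLin M)‖

/-- The `i`-th largest singular value of a square complex matrix (`i = 0` is the largest). -/
noncomputable def sval {n : ℕ} (M : Matrix (Fin n) (Fin n) ℂ) (i : Fin n) : ℝ :=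
  Real.sqrt ((Matrix.isHermitian_conjTranspose_mul_self M).eigenvalues
    (Tuple.sort (Matrix.isHermitian_conjTranspose_mul_self M).eigenvalues i.rev))

/-- `i - j` in `Fin r` (0-based counterpart of the index `i - j + 1`). -/
def isub {r : ℕ} (i j : Fin r) : Fin r :=
  ⟨i.val - j.val, lt_of_le_of_lt (Nat.sub_le _ _) i.isLt⟩

/-- `min_{1 ≤ j ≤ i} √(σ_j σ_{i-j+1})`, written 0-based. -/
noncomputable def pairMin {r : ℕ} (σ : Fin r → ℝ) (i : Fin r) : ℝ :=
  (Finset.Iic i).inf' ⟨i, Finset.mem_Iic.mpr le_rfl⟩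
    (fun j => Real.sqrt (σ j * σ (isub i j)))

theorem Module.exists_ne_zero_forall_dual_eq_zero {K V ι : Type*} [Field K] [AddCommGroup V]
    [Module K V] [FiniteDimensional K V] (φ : ι → Module.Dual K V) (s : Finset ι)
    (hs : #s < Module.finrank K V) : ∃ v ≠ 0, ∀ k ∈ s, φ k v = 0 := by
  let f : V →ₗ[K] (s → K) := LinearMap.pi fun k => φ k
  have hker : LinearMap.ker f ≠ ⊥ := LinearMap.ker_ne_bot_of_finrank_lt (by simpa using hs)
  obtain ⟨v, hv, hv0⟩ := (Submodule.ne_bot_iff _).mp hker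
  exact ⟨v, hv0, fun k hk => congr_fun (LinearMap.mem_ker.mp hv) ⟨k, hk⟩⟩

section EuclideanSpace

variable {𝕜 ι κ : Type*} [RCLike 𝕜] [Fintype ι] [Fintype κ]

theorem EuclideanSpace.norm_le_mul_of_forall_norm_apply_le {x y : EuclideanSpace 𝕜 ι} {c : ℝ}
    (hc : 0 ≤ c) (h : ∀ k, ‖x k‖ ≤ c * ‖y k‖) : ‖x‖ ≤ c * ‖y‖ := by
  rw [EuclideanSpace.norm_eq, EuclideanSpace.norm_eq, ← Real.sqrt_sq hc,
    ← Real.sqrt_mul (sq_nonneg c), Finset.mul_sum]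
  gcongr with k
  simpa [mul_pow] using pow_le_pow_left₀ (norm_nonneg _) (h k) 2

theorem Matrix.norm_toEuclideanLin_diagonal_le [DecidableEq ι] (d : ι → 𝕜)
    (y : EuclideanSpace 𝕜 ι) {c : ℝ} (hc : 0 ≤ c) (hd : ∀ k, y k ≠ 0 → ‖d k‖ ≤ c) :
    ‖toEuclideanLin (diagonal d) y‖ ≤ c * ‖y‖ := by
  refine EuclideanSpace.norm_le_mul_of_forall_norm_apply_le hc fun k => ?_
  rw [toLpLin_apply, PiLp.toLp_apply, mulVec_diagonal, norm_mul]
  by_cases hk : y k = 0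
  · simp [hk]
  · exact mul_le_mul_of_nonneg_right (hd k hk) (norm_nonneg _)

theorem Matrix.norm_toEuclideanLin_of_conjTranspose_mul_self_eq_one [DecidableEq ι]
    {Q : Matrix κ ι 𝕜} (hQ : Qᴴ * Q = 1) (x : EuclideanSpace 𝕜 ι) :
    ‖toEuclideanLin Q x‖ = ‖x‖ := by
  classical
  have h : inner 𝕜 (toEuclideanLin Q x) (toEuclideanLin Q x) = inner 𝕜 x x := by
    rw [← LinearMap.adjoint_inner_right, ← toEuclideanLin_conjTranspose_eq_adjoint,
      ← LinearMap.comp_apply, ← toLpLin_mul_same, hQ, toLpLin_one, LinearMap.id_apply]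
  rw [← sq_eq_sq₀ (norm_nonneg _) (norm_nonneg _), ← inner_self_eq_norm_sq (𝕜 := 𝕜), h,
    inner_self_eq_norm_sq]

end EuclideanSpace

theorem Matrix.norm_toEuclideanLin_diagonal_sqrt_le {ι : Type*} [Fintype ι] [DecidableEq ι]
    [LinearOrder ι] {σ : ι → ℝ} (hσ : Antitone σ) {t : ι} {y : EuclideanSpace ℂ ι}
    (hy : ∀ k < t, y k = 0) :
    ‖toEuclideanLin (diagonal fun k => (√(σ k) : ℂ)) y‖ ≤ √(σ t) * ‖y‖ := by
  refine norm_toEuclideanLin_diagonal_le _ _ (Real.sqrt_nonneg _) fun k hk => ?_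
  rw [Complex.norm_real, Real.norm_of_nonneg (Real.sqrt_nonneg _)]
  exact Real.sqrt_le_sqrt (hσ (not_lt.mp fun hkt => hk (hy k hkt)))

theorem Matrix.norm_toEuclideanLin_le_specNorm_mul {m n : ℕ} (M : Matrix (Fin m) (Fin n) ℂ)
    (x : EuclideanSpace ℂ (Fin n)) : ‖toEuclideanLin M x‖ ≤ specNorm M * ‖x‖ :=
  (LinearMap.toContinuousLinearMap (toEuclideanLin M)).le_opNorm x

theorem norm_toEuclideanLin_diagonal_sqrt_mul_mul_diagonal_sqrt_le {r : ℕ} {σ : Fin r → ℝ}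
    (hσ : Antitone σ) {H : Matrix (Fin r) (Fin r) ℂ} (hH : specNorm H ≤ 1) {j t : Fin r}
    {y : EuclideanSpace ℂ (Fin r)} (hy : ∀ k < t, y k = 0)
    (hHy : ∀ k < j, toEuclideanLin (H * diagonal fun k => (√(σ k) : ℂ)) y k = 0) :
    ‖toEuclideanLin ((diagonal fun k => (√(σ k) : ℂ)) * H * diagonal fun k => (√(σ k) : ℂ)) y‖
      ≤ √(σ j) * √(σ t) * ‖y‖ := by
  set D : Matrix (Fin r) (Fin r) ℂ := diagonal fun k => (√(σ k) : ℂ)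
  have hHD : ‖toEuclideanLin (H * D) y‖ ≤ ‖toEuclideanLin D y‖ := by
    rw [toLpLin_mul_same, LinearMap.comp_apply]
    exact (norm_toEuclideanLin_le_specNorm_mul H _).trans
      (mul_le_of_le_one_left (norm_nonneg _) hH)
  calc ‖toEuclideanLin (D * H * D) y‖ = ‖toEuclideanLin D (toEuclideanLin (H * D) y)‖ := by
        rw [Matrix.mul_assoc, toLpLin_mul_same, LinearMap.comp_apply]
    _ ≤ √(σ j) * ‖toEuclideanLin (H * D) y‖ := norm_toEuclideanLin_diagonal_sqrt_le hσ hHy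
    _ ≤ √(σ j) * (√(σ t) * ‖y‖) := by
        gcongr
        exact hHD.trans (norm_toEuclideanLin_diagonal_sqrt_le hσ hy)
    _ = √(σ j) * √(σ t) * ‖y‖ := by ring

theorem exists_unit_vector_small_image_general {r : ℕ} (σ : Fin r → ℝ) (hσ : Antitone σ)
    (hpos : ∀ j, 0 < σ j) (H : Matrix (Fin r) (Fin r) ℂ)
    (hnorm : specNorm H ≤ 1) (i : Fin r)
    (Q : Matrix (Fin r) (Fin (i.val + 1)) ℂ) (hQ : Qᴴ * Q = 1) :
    ∃ v : EuclideanSpace ℂ (Fin (i.val + 1)), ‖v‖ = 1 ∧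
      ‖Matrix.toEuclideanLin
        (Matrix.diagonal (fun j => (Real.sqrt (σ j) : ℂ)) * H *
          Matrix.diagonal (fun j => (Real.sqrt (σ j) : ℂ)) * Q) v‖ ≤ pairMin σ i := by
  set D : Matrix (Fin r) (Fin r) ℂ := diagonal fun j => (√(σ j) : ℂ)
  obtain ⟨j, hj, hmin⟩ : ∃ j ∈ Iic i, pairMin σ i = √(σ j * σ (isub i j)) :=
    exists_mem_eq_inf' _ _
  set t := isub i j
  let φ : Fin r ⊕ Fin r → Module.Dual ℂ (EuclideanSpace ℂ (Fin (i.val + 1))) :=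
    Sum.elim (fun k => (EuclideanSpace.proj k).toLinearMap ∘ₗ toEuclideanLin (H * D * Q))
      (fun k => (EuclideanSpace.proj k).toLinearMap ∘ₗ toEuclideanLin Q)
  obtain ⟨w, hw0, hw⟩ := Module.exists_ne_zero_forall_dual_eq_zero φ ((Iio j).disjSum (Iio t))
    (by have := Fin.le_def.mp (mem_Iic.mp hj); simp [t, isub]; omega)
  have hbound := norm_toEuclideanLin_diagonal_sqrt_mul_mul_diagonal_sqrt_le hσ hnorm
    (j := j) (t := t) (y := toEuclideanLin Q w) (fun k hk => hw (.inr k) (by simpa using hk))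
    (fun k hk => by simpa [φ, Matrix.mul_assoc] using hw (.inl k) (by simpa using hk))
  rw [norm_toEuclideanLin_of_conjTranspose_mul_self_eq_one hQ] at hbound
  refine ⟨(‖w‖⁻¹ : ℂ) • w, norm_smul_inv_norm hw0, ?_⟩
  rw [map_smul, norm_smul, norm_inv, Complex.norm_real, norm_norm,
    inv_mul_le_iff₀ (norm_pos_iff.mpr hw0), hmin, Real.sqrt_mul (hpos j).le,
    toLpLin_mul_same, LinearMap.comp_apply, mul_comm ‖w‖]
  exact hbound

/-- Key step: for Hermitian `H` with `‖H‖₂ ≤ 1` and any `Q` with orthonormal columns,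
there is a unit vector `v` with `‖DHDQv‖₂ ≤ min_{1 ≤ j ≤ i} √(σ_j σ_{i-j+1})`. -/
theorem exists_unit_vector_small_image {r : ℕ} (σ : Fin r → ℝ) (hσ : Antitone σ)
    (hpos : ∀ j, 0 < σ j) (H : Matrix (Fin r) (Fin r) ℂ) (hH : H.IsHermitian)
    (hnorm : specNorm H ≤ 1) (i : Fin r)
    (Q : Matrix (Fin r) (Fin (i.val + 1)) ℂ) (hQ : Qᴴ * Q = 1) :
    ∃ v : EuclideanSpace ℂ (Fin (i.val + 1)), ‖v‖ = 1 ∧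
      ‖Matrix.toEuclideanLin
        (Matrix.diagonal (fun j => (Real.sqrt (σ j) : ℂ)) * H *
          Matrix.diagonal (fun j => (Real.sqrt (σ j) : ℂ)) * Q) v‖ ≤ pairMin σ i :=
  exists_unit_vector_small_image_general σ hσ hpos H hnorm i Q hQ
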